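/- arXiv:1709.03422 — 7 statements merged into one kernel-verified Lean document; each statement's English description precedes it below -/
import Mathlib

section
/- The k-subalgebra B₀ of A generated by x⁻¹ and y·x^{−(g+1)} is equal, as a k-subspace of A, to the k-linear span of the set {x^{−n} : n ≥ 0} ∪ {y·x^{−m} : m ≥ g+1}. -/
open Polynomial

/-- The defining polynomial `Y² − h(X)·Y − f(X)` of a hyperelliptic curve, as a polynomial
in `Y` over `k[X]`. -/
noncomputable def hypPoly {k : Type} [Field k] (h f : k[X]) : Polynomial (Polynomial k) :=
  X ^ 2 - C h * X - C f

/-- The affine coordinate ring `R = k[X][Y]/(Y² − h·Y − f)` of the curve over `U_∞`. -/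
abbrev HypRing {k : Type} [Field k] (h f : k[X]) : Type :=
  AdjoinRoot (hypPoly h f)

/-- The image `x` of `X` in `R`. -/
noncomputable def hypX {k : Type} [Field k] (h f : k[X]) : HypRing h f :=
  AdjoinRoot.of (hypPoly h f) X

/-- The image `y` of `Y` in `R`. -/
noncomputable def hypY {k : Type} [Field k] (h f : k[X]) : HypRing h f :=
  AdjoinRoot.root (hypPoly h f)

/-- `A = R[1/x] = O_X(U₀ ∩ U_∞)`. -/
abbrev HypA {k : Type} [Field k] (h f : k[X]) : Type :=
  Localization.Away (hypX h f)

/-- `x` as a unit of `A`. -/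
noncomputable def hypXUnit {k : Type} [Field k] (h f : k[X]) : (HypA h f)ˣ :=
  (IsLocalization.Away.algebraMap_isUnit (S := HypA h f) (hypX h f)).unit

/-- The image of `y` in `A`. -/
noncomputable def hypYA {k : Type} [Field k] (h f : k[X]) : HypA h f :=
  algebraMap (HypRing h f) (HypA h f) (hypY h f)

/-!
With `t = x⁻¹` and `w = y·x^{-(g+1)}`, the span on the right is `k[t] + w·k[t]`. Multiplying
`y² = h(x)·y + f(x)` by `x^{-(2g+2)}` gives `w² = a·w + b` with `a = h(x)·t^{g+1}` and
`b = f(x)·t^{2g+2}`; by the degree bounds these are the reversed polynomials of `h` and `f`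
evaluated at `t`, so they lie in `k[t]`. Hence `k[t] + w·k[t]` is stable under multiplication by
`t` and `w`, and is therefore the algebra generated by them.
-/

section PairSpan

variable {R A : Type*} [CommSemiring R] [CommSemiring A] [Algebra R A]

theorem Algebra.mul_mem_of_mem_adjoin {s : Set A} {M : Submodule R A}
    (hs : ∀ a ∈ s, ∀ c ∈ M, a * c ∈ M) {z c : A} (hz : z ∈ Algebra.adjoin R s) (hc : c ∈ M) :
    z * c ∈ M := by
  induction hz using Algebra.adjoin_induction generalizing c with
  | mem a ha => exact hs a ha c hc
  | algebraMap r =>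
    rw [Algebra.algebraMap_eq_smul_one, smul_mul_assoc, one_mul]
    exact M.smul_mem r hc
  | add a b _ _ iha ihb => exact add_mul a b c ▸ add_mem (iha hc) (ihb hc)
  | mul a b _ _ iha ihb => exact (mul_assoc a b c).symm ▸ iha (ihb hc)

theorem Submodule.mul_mem_span_of_mul_mem {S : Set A} {a c : A}
    (hS : ∀ s ∈ S, a * s ∈ Submodule.span R S) (hc : c ∈ Submodule.span R S) :
    a * c ∈ Submodule.span R S :=
  (Submodule.span_le (p := (Submodule.span R S).comap (LinearMap.mulLeft R a))).2 hS hc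

variable (R) in
def pairSpan (t w : A) : Submodule R A :=
  Submodule.span R (Set.range (t ^ ·) ∪ Set.range (w * t ^ ·))

variable {t w : A}

theorem pow_mem_pairSpan (n : ℕ) : t ^ n ∈ pairSpan R t w :=
  Submodule.subset_span (Or.inl ⟨n, rfl⟩)

theorem mul_pow_mem_pairSpan (n : ℕ) : w * t ^ n ∈ pairSpan R t w :=
  Submodule.subset_span (Or.inr ⟨n, rfl⟩)

theorem mul_mem_pairSpan_of_mem_adjoin_singleton {z c : A} (hz : z ∈ Algebra.adjoin R {t})
    (hc : c ∈ pairSpan R t w) : z * c ∈ pairSpan R t w := by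
  refine Algebra.mul_mem_of_mem_adjoin (forall_eq.2 fun c hc ↦ ?_) hz hc
  refine Submodule.mul_mem_span_of_mul_mem ?_ hc
  rintro _ (⟨n, rfl⟩ | ⟨n, rfl⟩)
  · exact pow_succ' t n ▸ pow_mem_pairSpan (n + 1)
  · exact mul_left_comm w t _ ▸ pow_succ' t n ▸ mul_pow_mem_pairSpan (n + 1)

variable {a b : A}

theorem mul_mem_pairSpan_of_mem_adjoin_pair (hw : w ^ 2 = a * w + b)
    (ha : a ∈ Algebra.adjoin R {t}) (hb : b ∈ Algebra.adjoin R {t}) {z c : A}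
    (hz : z ∈ Algebra.adjoin R {t, w}) (hc : c ∈ pairSpan R t w) : z * c ∈ pairSpan R t w := by
  refine Algebra.mul_mem_of_mem_adjoin
    (Set.forall_mem_insert.2 ⟨fun c hc ↦ ?_, forall_eq.2 fun c hc ↦ ?_⟩) hz hc
  · exact mul_mem_pairSpan_of_mem_adjoin_singleton (Algebra.self_mem_adjoin_singleton R _) hc
  refine Submodule.mul_mem_span_of_mul_mem ?_ hc
  rintro _ (⟨n, rfl⟩ | ⟨n, rfl⟩)
  · exact mul_pow_mem_pairSpan n
  · have hwwt : w * (w * t ^ n) = a * (w * t ^ n) + b * t ^ n := by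
      rw [← mul_assoc, ← sq, hw, add_mul, mul_assoc]
    rw [hwwt]
    exact add_mem (mul_mem_pairSpan_of_mem_adjoin_singleton ha (mul_pow_mem_pairSpan n))
      (mul_mem_pairSpan_of_mem_adjoin_singleton hb (pow_mem_pairSpan n))

theorem toSubmodule_adjoin_pair_eq_pairSpan (hw : w ^ 2 = a * w + b)
    (ha : a ∈ Algebra.adjoin R {t}) (hb : b ∈ Algebra.adjoin R {t}) :
    Subalgebra.toSubmodule (Algebra.adjoin R {t, w}) = pairSpan R t w := by
  apply le_antisymm
  · intro z hz
    simpa using mul_mem_pairSpan_of_mem_adjoin_pair hw ha hb hz (pow_mem_pairSpan 0)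
  · rw [pairSpan, Submodule.span_le]
    have htmem : t ∈ Algebra.adjoin R {t, w} := Algebra.subset_adjoin (Set.mem_insert _ _)
    have hwmem : w ∈ Algebra.adjoin R {t, w} := Algebra.subset_adjoin (Set.mem_insert_of_mem _ rfl)
    rintro _ (⟨n, rfl⟩ | ⟨n, rfl⟩) <;> rw [SetLike.mem_coe, Subalgebra.mem_toSubmodule]
    · exact pow_mem htmem n
    · exact mul_mem hwmem (pow_mem htmem n)

end PairSpan

section UnitPowers

variable {R A : Type*} [CommSemiring R] [CommRing A] [Algebra R A]

theorem Polynomial.aeval_mul_inv_pow_mem_adjoin (u : Aˣ) {p : R[X]} {N : ℕ}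
    (hp : p.natDegree ≤ N) :
    aeval (u : A) p * (↑u⁻¹ : A) ^ N ∈ Algebra.adjoin R {(↑u⁻¹ : A)} := by
  have hrefl := eval₂_reflect_mul_pow (algebraMap R A) (u : A) N p hp
  rw [invOf_units] at hrefl
  rw [aeval_def, ← hrefl, mul_assoc, ← mul_pow, Units.mul_inv, one_pow, mul_one]
  exact aeval_mem_adjoin_singleton R _

theorem toSubmodule_adjoin_inv_eq_span (u : Aˣ) (y : A) {p q : R[X]} {d : ℕ}
    (hp : p.natDegree ≤ d) (hq : q.natDegree ≤ 2 * d)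
    (hy : y ^ 2 = aeval (u : A) p * y + aeval (u : A) q) :
    Subalgebra.toSubmodule
        (Algebra.adjoin R {((u ^ (-1 : ℤ) : Aˣ) : A), y * ((u ^ (-(d : ℤ)) : Aˣ) : A)}) =
      Submodule.span R ({a : A | ∃ n : ℕ, a = ((u ^ (-(n : ℤ)) : Aˣ) : A)} ∪
        {a : A | ∃ m : ℕ, d ≤ m ∧ a = y * ((u ^ (-(m : ℤ)) : Aˣ) : A)}) := by
  set t : A := ↑u⁻¹
  have hpow (n : ℕ) : ((u ^ (-(n : ℤ)) : Aˣ) : A) = t ^ n := by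
    rw [zpow_neg, zpow_natCast, ← inv_pow, Units.val_pow_eq_pow_val]
  have hsets : {a : A | ∃ n : ℕ, a = ((u ^ (-(n : ℤ)) : Aˣ) : A)} ∪
      {a : A | ∃ m : ℕ, d ≤ m ∧ a = y * ((u ^ (-(m : ℤ)) : Aˣ) : A)} =
      Set.range (t ^ ·) ∪ Set.range (y * t ^ d * t ^ ·) := by
    congr 1
    · ext a
      simp only [hpow, Set.mem_ofPred_eq, Set.mem_range, eq_comm]
    · ext a
      simp only [hpow, Set.mem_ofPred_eq, Set.mem_range]
      constructor
      · rintro ⟨m, hm, rfl⟩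
        exact ⟨m - d, by rw [mul_assoc, ← pow_add, Nat.add_sub_cancel' hm]⟩
      · rintro ⟨n, rfl⟩
        exact ⟨d + n, Nat.le_add_right d n, by rw [mul_assoc, ← pow_add]⟩
  rw [zpow_neg_one, hpow, hsets]
  refine toSubmodule_adjoin_pair_eq_pairSpan (a := aeval (u : A) p * t ^ d)
    (b := aeval (u : A) q * t ^ (2 * d)) ?_ (aeval_mul_inv_pow_mem_adjoin u hp)
    (aeval_mul_inv_pow_mem_adjoin u hq)
  linear_combination t ^ (2 * d) * hy

end UnitPowers

theorem hypYA_sq {k : Type} [Field k] (h f : k[X]) :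
    hypYA h f ^ 2 =
      aeval (hypXUnit h f : HypA h f) h * hypYA h f + aeval (hypXUnit h f : HypA h f) f := by
  have hrel : hypY h f ^ 2 =
      AdjoinRoot.of (hypPoly h f) h * hypY h f + AdjoinRoot.of (hypPoly h f) f := by
    have hroot := AdjoinRoot.eval₂_root (hypPoly h f)
    rw [hypPoly] at hroot
    simp only [eval₂_sub, eval₂_mul, eval₂_X_pow, eval₂_X, eval₂_C] at hroot
    exact eq_add_of_sub_eq' (sub_eq_zero.1 hroot)
  have hx : (hypXUnit h f : HypA h f) = algebraMap k[X] (HypA h f) X := IsUnit.unit_spec _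
  rw [hx, aeval_algebraMap_apply, aeval_algebraMap_apply, aeval_X_left_apply, aeval_X_left_apply,
    hypYA, ← map_pow, hrel]
  simp only [map_add, map_mul, ← AdjoinRoot.algebraMap_eq, ← IsScalarTower.algebraMap_apply]

theorem statement1_general {k : Type} [Field k] (g : ℕ)
    (f h : k[X]) (hdegf : f.natDegree ≤ 2 * g + 2)
    (hdegh : h.natDegree ≤ g + 1) :
    Subalgebra.toSubmodule
        (Algebra.adjoin k
          {((hypXUnit h f ^ (-1 : ℤ) : (HypA h f)ˣ) : HypA h f),
            hypYA h f * ((hypXUnit h f ^ (-(g + 1 : ℤ)) : (HypA h f)ˣ) : HypA h f)}) =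
      Submodule.span k
        ({ a : HypA h f | ∃ n : ℕ, a = ((hypXUnit h f ^ (-(n : ℤ)) : (HypA h f)ˣ) : HypA h f) } ∪
          { a : HypA h f | ∃ m : ℕ, g + 1 ≤ m ∧
              a = hypYA h f * ((hypXUnit h f ^ (-(m : ℤ)) : (HypA h f)ˣ) : HypA h f) }) := by
  have hspan := toSubmodule_adjoin_inv_eq_span (hypXUnit h f) (hypYA h f) hdegh
    (by omega : f.natDegree ≤ 2 * (g + 1)) (hypYA_sq h f)
  rwa [Nat.cast_add, Nat.cast_one] at hspan

/-- The `k`-subalgebra `B₀` of `A` generated by `x⁻¹` and `y·x^{−(g+1)}`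
equals, as a `k`-subspace of `A`, the `k`-linear span of
`{x^{−n} : n ≥ 0} ∪ {y·x^{−m} : m ≥ g+1}`. -/
theorem statement1 {k : Type} [Field k] [IsAlgClosed k] (g : ℕ) (hg : 2 ≤ g)
    (f h : k[X]) (hf : f.Monic) (hdegf : f.natDegree ≤ 2 * g + 2)
    (hdegh : h.natDegree ≤ g + 1)
    (hirr : Irreducible
      ((hypPoly h f).map (algebraMap (Polynomial k) (RatFunc k)))) :
    Subalgebra.toSubmodule
        (Algebra.adjoin k
          {((hypXUnit h f ^ (-1 : ℤ) : (HypA h f)ˣ) : HypA h f),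
            hypYA h f * ((hypXUnit h f ^ (-(g + 1 : ℤ)) : (HypA h f)ˣ) : HypA h f)}) =
      Submodule.span k
        ({ a : HypA h f | ∃ n : ℕ, a = ((hypXUnit h f ^ (-(n : ℤ)) : (HypA h f)ˣ) : HypA h f) } ∪
          { a : HypA h f | ∃ m : ℕ, g + 1 ≤ m ∧
              a = hypYA h f * ((hypXUnit h f ^ (-(m : ℤ)) : (HypA h f)ˣ) : HypA h f) }) :=
  statement1_general g f h hdegf hdegh
end

section
/- In k[X] one has the identity r_i′(X)·(X − a) − g·r_i(X) = (−1)^{g−i}·i·(g choose i)·a^{g−i+1}·X^{i−1}. -/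
open Polynomial

/-- `r_i(X)`, the truncation of `(X − a)^g` in degrees `≤ i − 1`. -/
noncomputable def truncR {k : Type} [Field k] (g : ℕ) (a : k) (i : ℕ) : k[X] :=
  ∑ j ∈ Finset.range i, C (((X - C a) ^ g).coeff j) * X ^ j

lemma coeff_X_sub_C_pow' {k : Type} [Field k] (a : k) (g j : ℕ) :
    ((X - C a) ^ g).coeff j = (-a) ^ (g - j) * (g.choose j : k) := by
  rw [sub_eq_add_neg, ← C_neg, coeff_X_add_C_pow]

/-- In `k[X]` one has
`r_i′(X)·(X − a) − g·r_i(X) = (−1)^{g−i}·i·(g choose i)·a^{g−i+1}·X^{i−1}`. -/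
theorem statement5 {k : Type} [Field k] (g : ℕ) (hg : 1 ≤ g) (a : k)
    (i : ℕ) (hi1 : 1 ≤ i) (hig : i ≤ g) :
    derivative (truncR g a i) * (X - C a) - C (g : k) * truncR g a i =
      C ((-1 : k) ^ (g - i) * (i : k) * (g.choose i : k) * a ^ (g - i + 1)) * X ^ (i - 1) := by
  induction i, hi1 using Nat.le_induction with
  | base =>
    simp only [truncR, Finset.range_one, Finset.sum_singleton, pow_zero, mul_one,
      derivative_mul, derivative_C, derivative_one, zero_mul, mul_zero, zero_add,
      Nat.sub_zero, Nat.choose_one_right]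
    rw [coeff_X_sub_C_pow', Nat.sub_zero, Nat.choose_zero_right]
    simp only [derivative_C, zero_mul, zero_sub, Nat.cast_one, mul_one]
    rw [← C_mul, ← C_neg]
    congr 1
    have : (-a : k) ^ g = (-1) ^ g * a ^ g := by rw [neg_pow]
    rw [this]
    have hgs : g - 1 + 1 = g := Nat.succ_pred_eq_of_pos hg
    have : ((-1 : k)) ^ g = (-1) ^ (g - 1) * (-1) := by
      rw [← pow_succ, hgs]
    rw [this, hgs]
    ring
  | succ i hi1 ih =>
    have hig' : i ≤ g := Nat.le_of_succ_le hig
    have IH := ih hig'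
    -- decompose truncR at i+1
    have hsplit : truncR g a (i + 1) = truncR g a i +
        C (((X - C a) ^ g).coeff i) * X ^ i := by
      rw [truncR, Finset.sum_range_succ]; rfl
    set c : k := ((X - C a) ^ g).coeff i with hc
    have hi0 : i - 1 + 1 = i := Nat.succ_pred_eq_of_pos hi1
    have hXi : (X : k[X]) ^ i = X ^ (i - 1) * X := by
      rw [← pow_succ, hi0]
    have hder : derivative (C c * X ^ i) = C c * (C (i : k) * X ^ (i - 1)) := by
      rw [derivative_C_mul, derivative_X_pow]
    -- scalar identities
    have hcv : c = (-1 : k) ^ (g - i) * a ^ (g - i) * (g.choose i : k) := by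
      rw [hc, coeff_X_sub_C_pow', neg_pow]
    have hgi : g - i = (g - (i + 1)) + 1 := by omega
    have hgi2 : g - i + 1 = (g - (i + 1)) + 2 := by omega
    -- h2 : a * i * c = t_i
    have h2 : a * (i : k) * c =
        (-1 : k) ^ (g - i) * (i : k) * (g.choose i : k) * a ^ (g - i + 1) := by
      rw [hcv, pow_succ a (g - i)]; ring
    -- h1 : (i - g) * c = t_{i+1}
    have hchoose : ((i + 1 : ℕ) : k) * (g.choose (i + 1) : k) =
        ((g - i : ℕ) : k) * (g.choose i : k) := by
      have := Nat.choose_succ_right_eq g i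
      have : (g.choose (i + 1) * (i + 1) : ℕ) = g.choose i * (g - i) := this
      have := congrArg (Nat.cast : ℕ → k) this
      push_cast at this ⊢
      linear_combination this
    have hgsub : ((g - i : ℕ) : k) = (g : k) - (i : k) := by
      have := Nat.cast_sub hig' (R := k); exact this
    rw [hgsub] at hchoose
    obtain ⟨d, hd⟩ : ∃ d, g - i = d + 1 := ⟨g - (i + 1), by omega⟩
    have hd2 : g - (i + 1) = d := by omega
    have h1 : (i : k) * c - (g : k) * c =
        (-1 : k) ^ (g - (i + 1)) * ((i + 1 : ℕ) : k) * (g.choose (i + 1) : k)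
          * a ^ (g - (i + 1) + 1) := by
      rw [hcv, hd, hd2, pow_succ (-1 : k) d]
      push_cast at hchoose ⊢
      linear_combination (-((-1 : k) ^ d * a ^ (d + 1))) * hchoose
    -- assemble
    rw [hsplit]
    rw [derivative_add, hder]
    have hC1 : C (i : k) * C c - C (g : k) * C c =
        C ((-1 : k) ^ (g - (i + 1)) * ((i + 1 : ℕ) : k) * (g.choose (i + 1) : k)
          * a ^ (g - (i + 1) + 1)) := by
      rw [← C_mul, ← C_mul, ← C_sub, h1]
    have hC2 : C a * C (i : k) * C c =
        C ((-1 : k) ^ (g - i) * (i : k) * (g.choose i : k) * a ^ (g - i + 1)) := by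
      rw [← C_mul, ← C_mul, h2]
    have hgoalpow : (i + 1) - 1 = i := by omega
    rw [hgoalpow]
    calc (derivative (truncR g a i) + C c * (C (i : k) * X ^ (i - 1))) * (X - C a)
          - C (g : k) * (truncR g a i + C c * X ^ i)
        = (derivative (truncR g a i) * (X - C a) - C (g : k) * truncR g a i)
          + (C (i : k) * C c - C (g : k) * C c) * X ^ i
          - C a * C (i : k) * C c * X ^ (i - 1) := by
          rw [hXi]; ring
      _ = _ := by
          rw [IH, hC1, hC2]
          ring
end

section
/- For every k-linear derivation D : K → K with D(x) = 1, one has in K: D( r_i(x)·y / (xⁱ·(x−a)^g) ) = ψ_i(x)/(2·x^{i+1}·y) − [ (ψ_i(x)·t_i(x) − φ_i(x)·r_i(x))·(x−a) − 2i·f(x)·(−1)^{g−i}·(g choose i)·a^{g−i+1}·xⁱ ] / (2·x^{i+1}·(x−a)^{g+1}·y). -/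
/-!
Put `r = r_i(x)` and `v = xⁱ(x − a)^g`. Since `(X − a)·((X − a)^g)′ = g·(X − a)^g`, comparing
coefficients shows that the truncation `r_i` satisfies the same equation up to the single term
that the dropped monomial of degree `i` leaves behind:
`(X − a)·r_i′ − g·r_i = i·(−1)^{g−i}·(g choose i)·a^{g−i+1}·X^{i−1}`.
Together with `2y·D y = f′(x)`, the quotient rule then gives
`D(r y / v) = (r·s_i(x)·(x − a) + 2i·f(x)·(−1)^{g−i}·(g choose i)·a^{g−i+1}·xⁱ) / (2x^{i+1}(x − a)^{g+1}y)`,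
and the stated right-hand side is this expression rewritten through `s_i = ψ_i + φ_i` and
`(x − a)^g = r_i + t_i`: the `ψ_i`-terms cancel.
-/

open Polynomial

/-- The defining polynomial `Y² − f(X)`, as a polynomial in `Y` over `k[X]`. -/
noncomputable def oddPoly {k : Type} [Field k] (f : k[X]) : Polynomial (Polynomial k) :=
  X ^ 2 - C f

/-- The affine coordinate ring `k[X][Y]/(Y² − f(X))`. -/
abbrev OddRing {k : Type} [Field k] (f : k[X]) : Type :=
  AdjoinRoot (oddPoly f)

/-- The truncation of a polynomial in degrees `≤ m`. -/
noncomputable def truncLE {k : Type} [Field k] (m : ℕ) (u : k[X]) : k[X] :=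
  ∑ j ∈ Finset.range (m + 1), C (u.coeff j) * X ^ j

/-- `s_i(X) := X·f′(X) − 2i·f(X)`. -/
noncomputable def sPoly {k : Type} [Field k] (f : k[X]) (i : ℕ) : k[X] :=
  X * derivative f - C ((2 * i : ℕ) : k) * f

/-- `ψ_i(X)`, the truncation of `s_i` in degrees `≤ i`. -/
noncomputable def psiPoly {k : Type} [Field k] (f : k[X]) (i : ℕ) : k[X] :=
  truncLE i (sPoly f i)

/-- `φ_i(X) := s_i(X) − ψ_i(X)`. -/
noncomputable def phiPoly {k : Type} [Field k] (f : k[X]) (i : ℕ) : k[X] :=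
  sPoly f i - psiPoly f i

/-- `t_i(X) := (X − a)^g − r_i(X)`. -/
noncomputable def truncT {k : Type} [Field k] (g : ℕ) (a : k) (i : ℕ) : k[X] :=
  (X - C a) ^ g - truncR g a i

namespace Polynomial

variable {R : Type*} [CommRing R]

theorem coeff_X_sub_C_mul_derivative (a : R) (Q : R[X]) (n : ℕ) :
    ((X - C a) * derivative Q).coeff n = Q.coeff n * n - a * (Q.coeff (n + 1) * (n + 1)) := by
  rw [sub_mul, coeff_sub, coeff_C_mul, coeff_derivative]
  cases n with
  | zero => simp
  | succ m => rw [coeff_X_mul, coeff_derivative]; push_cast; ring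

theorem coeff_sum_range_C_coeff_mul_X_pow (P : R[X]) (i n : ℕ) :
    (∑ j ∈ Finset.range i, C (P.coeff j) * X ^ j).coeff n = if n < i then P.coeff n else 0 := by
  simp [coeff_C_mul, coeff_X_pow, Finset.mem_range]

theorem X_sub_C_mul_derivative_truncation_sub {P : R[X]} {a c : R}
    (hP : (X - C a) * derivative P = C c * P) {i : ℕ} (hi : 1 ≤ i) :
    (X - C a) * derivative (∑ j ∈ Finset.range i, C (P.coeff j) * X ^ j) -
        C c * ∑ j ∈ Finset.range i, C (P.coeff j) * X ^ j =
      C (a * i * P.coeff i) * X ^ (i - 1) := by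
  have hcoeff (n : ℕ) : P.coeff n * n - a * (P.coeff (n + 1) * (n + 1)) = c * P.coeff n := by
    simpa only [coeff_X_sub_C_mul_derivative, coeff_C_mul] using congrArg (coeff · n) hP
  ext n
  simp only [coeff_sub, coeff_X_sub_C_mul_derivative, coeff_C_mul, coeff_X_pow,
    coeff_sum_range_C_coeff_mul_X_pow]
  rcases lt_trichotomy (n + 1) i with hn | rfl | hn
  · simp only [if_pos hn, if_pos (Nat.lt_of_succ_lt hn), if_neg (show n ≠ i - 1 by omega)]
    linear_combination hcoeff n
  · simp only [if_pos n.lt_succ_self, lt_irrefl, if_false, Nat.add_sub_cancel, if_true]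
    push_cast
    linear_combination hcoeff n
  · simp [if_neg (show ¬n < i by omega), if_neg (show ¬n + 1 < i by omega),
      if_neg (show n ≠ i - 1 by omega)]

theorem X_sub_C_mul_derivative_X_sub_C_pow (a : R) (g : ℕ) :
    (X - C a) * derivative ((X - C a) ^ g) = C (g : R) * (X - C a) ^ g := by
  cases g with
  | zero => simp
  | succ m =>
    rw [derivative_X_sub_C_pow, Nat.add_sub_cancel, pow_succ]
    ring

end Polynomial

theorem X_mul_X_sub_C_mul_derivative_truncR_sub {k : Type} [Field k] (g : ℕ) (a : k) {i : ℕ}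
    (hi : 1 ≤ i) :
    X * ((X - C a) * derivative (truncR g a i) - C (g : k) * truncR g a i) =
      C (i * ((-1) ^ (g - i) * g.choose i * a ^ (g - i + 1))) * X ^ i := by
  rw [truncR, X_sub_C_mul_derivative_truncation_sub (X_sub_C_mul_derivative_X_sub_C_pow a g) hi,
    sub_eq_add_neg, ← C_neg, coeff_X_add_C_pow, neg_pow, mul_left_comm, ← pow_succ',
    Nat.sub_add_cancel hi]
  congr 2
  ring

theorem Derivation.mul_map_pow {R A : Type*} [CommSemiring R] [CommSemiring A] [Algebra R A]
    (D : Derivation R A A) (x : A) (n : ℕ) : x * D (x ^ n) = n * x ^ n * D x := by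
  rw [D.leibniz_pow, smul_eq_mul, nsmul_eq_mul]
  cases n with
  | zero => simp
  | succ m => rw [Nat.add_sub_cancel, pow_succ]; ring

theorem Derivation.map_mul_div_pow_mul_pow {k K : Type*} [CommRing k] [Field K] [Algebra k K]
    (D : Derivation k K K) {x y b R κ : K} {i g : ℕ} (hDx : D x = 1) (hDb : D b = 0)
    (hx : x ≠ 0) (hxb : x - b ≠ 0) (hy : y ≠ 0) (h2 : (2 : K) ≠ 0)
    (hR : x * ((x - b) * D R - g * R) = i * κ * x ^ i) :
    D (R * y / (x ^ i * (x - b) ^ g)) =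
      (R * (x * D (y * y) - 2 * i * (y * y)) * (x - b) + 2 * i * (y * y) * κ * x ^ i) /
        (2 * x ^ (i + 1) * (x - b) ^ (g + 1) * y) := by
  have hDy : D y = D (y * y) / (2 * y) := by
    rw [D.leibniz, smul_eq_mul, eq_div_iff (mul_ne_zero h2 hy)]; ring
  have hDxi : D (x ^ i) = i * x ^ i / x := by
    rw [eq_div_iff hx, mul_comm, D.mul_map_pow, hDx, mul_one]
  have hDxbg : D ((x - b) ^ g) = g * (x - b) ^ g / (x - b) := by
    rw [eq_div_iff hxb, mul_comm, D.mul_map_pow, map_sub, hDx, hDb, sub_zero, mul_one]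
  have hDR : D R = (i * κ * x ^ i / x + g * R) / (x - b) := by
    field_simp
    linear_combination hR
  rw [D.leibniz_div, D.leibniz, D.leibniz, hDy, hDxi, hDxbg, hDR]
  simp only [smul_eq_mul]
  field_simp
  ring

namespace OddRing

variable {k : Type} [Field k] {f : k[X]} {K : Type} [Field K] [Algebra k K]
  [Algebra (OddRing f) K] [IsScalarTower k (OddRing f) K]

theorem algebraMap_of_eq_aeval (u : k[X]) :
    algebraMap (OddRing f) K (AdjoinRoot.of (oddPoly f) u) =
      aeval (algebraMap (OddRing f) K (AdjoinRoot.of (oddPoly f) X)) u := by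
  let φ : k[X] →ₐ[k] K :=
    (IsScalarTower.toAlgHom k (OddRing f) K).comp (IsScalarTower.toAlgHom k k[X] (OddRing f))
  simpa [φ, aeval_X_left_apply] using (aeval_algHom_apply φ X u).symm

theorem aeval_ne_zero [IsFractionRing (OddRing f) K] {u : k[X]} (hu : u ≠ 0) :
    aeval (algebraMap (OddRing f) K (AdjoinRoot.of (oddPoly f) X)) u ≠ 0 := by
  have hdeg : (oddPoly f).degree ≠ 0 := by
    rw [oddPoly, degree_X_pow_sub_C two_pos]
    decide
  rw [← algebraMap_of_eq_aeval, ← map_zero (algebraMap (OddRing f) K),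
    (IsFractionRing.injective (OddRing f) K).ne_iff, ← map_zero (AdjoinRoot.of (oddPoly f)),
    (AdjoinRoot.of.injective_of_degree_ne_zero hdeg).ne_iff]
  exact hu

theorem root_mul_root :
    algebraMap (OddRing f) K (AdjoinRoot.root (oddPoly f)) *
        algebraMap (OddRing f) K (AdjoinRoot.root (oddPoly f)) =
      aeval (algebraMap (OddRing f) K (AdjoinRoot.of (oddPoly f) X)) f := by
  have h : AdjoinRoot.root (oddPoly f) ^ 2 = AdjoinRoot.of (oddPoly f) f := by
    have h := AdjoinRoot.eval₂_root (oddPoly f)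
    rw [oddPoly] at h
    simp only [eval₂_sub, eval₂_pow, eval₂_X, eval₂_C, sub_eq_zero] at h
    exact h
  rw [← map_mul, ← sq, h, algebraMap_of_eq_aeval]

end OddRing

theorem statement6_general {k : Type} [Field k] (hk2 : ringChar k ≠ 2)
    (f : k[X]) (hf0 : f.natDegree ≠ 0)
    (K : Type) [Field K] [Algebra k K] [Algebra (OddRing f) K]
    [IsScalarTower k (OddRing f) K] [IsFractionRing (OddRing f) K]
    (x y : K)
    (hx : x = algebraMap (OddRing f) K (AdjoinRoot.of (oddPoly f) X))
    (hy : y = algebraMap (OddRing f) K (AdjoinRoot.root (oddPoly f)))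
    (g : ℕ) (a : k) (i : ℕ) (hi1 : 1 ≤ i)
    (D : Derivation k K K) (hD : D x = 1) :
    D (aeval x (truncR g a i) * y / (x ^ i * (x - algebraMap k K a) ^ g)) =
      aeval x (psiPoly f i) / (2 * x ^ (i + 1) * y) -
        ((aeval x (psiPoly f i) * aeval x (truncT g a i) -
            aeval x (phiPoly f i) * aeval x (truncR g a i)) * (x - algebraMap k K a) -
          2 * (i : K) * aeval x f * (-1 : K) ^ (g - i) * (g.choose i : K) *
            algebraMap k K a ^ (g - i + 1) * x ^ i) /
        (2 * x ^ (i + 1) * (x - algebraMap k K a) ^ (g + 1) * y) := by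
  have hne (u : k[X]) (hu : u ≠ 0) : aeval x u ≠ 0 := hx ▸ OddRing.aeval_ne_zero hu
  have hx0 : x ≠ 0 := by simpa using hne X X_ne_zero
  have hxa : x - algebraMap k K a ≠ 0 := by simpa using hne (X - C a) (X_sub_C_ne_zero a)
  have hyy : y * y = aeval x f := hx ▸ hy ▸ OddRing.root_mul_root
  have hy0 : y ≠ 0 := by
    rintro rfl
    exact hne f (fun h => hf0 (by rw [h, natDegree_zero])) (by rw [← hyy, mul_zero])
  have h2 : (2 : K) ≠ 0 := by
    simpa only [map_ofNat, map_zero] using (algebraMap k K).injective.ne (Ring.two_ne_zero hk2)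
  have hR : x * ((x - algebraMap k K a) * D (aeval x (truncR g a i)) -
        g * aeval x (truncR g a i)) =
      i * ((-1) ^ (g - i) * g.choose i * algebraMap k K a ^ (g - i + 1)) * x ^ i := by
    simpa [D.map_aeval, hD] using
      congrArg (aeval x) (X_mul_X_sub_C_mul_derivative_truncR_sub g a hi1)
  rw [D.map_mul_div_pow_mul_pow hD (D.map_algebraMap a) hx0 hxa hy0 h2 hR, hyy, D.map_aeval, hD]
  simp only [phiPoly, truncT, sPoly, map_sub, map_mul, map_pow, aeval_X, aeval_C, map_natCast]
  field_simp
  push_cast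
  ring

/-- With `K` the fraction field of `k[X][Y]/(Y² − f(X))` (`char k ≠ 2`,
`f` nonconstant squarefree), `g ≥ 2`, `a ∈ k`, `1 ≤ i ≤ g`, and `D : K → K` any `k`-linear
derivation with `D x = 1`, one has
`D(r_i(x)·y/(xⁱ·(x−a)^g)) = ψ_i(x)/(2x^{i+1}y) −
 [(ψ_i(x)t_i(x) − φ_i(x)r_i(x))(x−a) − 2i·f(x)·(−1)^{g−i}·(g choose i)·a^{g−i+1}·xⁱ]
   / (2x^{i+1}(x−a)^{g+1}y)`. -/
theorem statement6 {k : Type} [Field k] (hk2 : ringChar k ≠ 2)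
    (f : k[X]) (hf0 : f.natDegree ≠ 0) (hsqf : Squarefree f)
    (K : Type) [Field K] [Algebra k K] [Algebra (OddRing f) K]
    [IsScalarTower k (OddRing f) K] [IsFractionRing (OddRing f) K]
    (x y : K)
    (hx : x = algebraMap (OddRing f) K (AdjoinRoot.of (oddPoly f) X))
    (hy : y = algebraMap (OddRing f) K (AdjoinRoot.root (oddPoly f)))
    (g : ℕ) (hg : 2 ≤ g) (a : k) (i : ℕ) (hi1 : 1 ≤ i) (hig : i ≤ g)
    (D : Derivation k K K) (hD : D x = 1) :
    D (aeval x (truncR g a i) * y / (x ^ i * (x - algebraMap k K a) ^ g)) =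
      aeval x (psiPoly f i) / (2 * x ^ (i + 1) * y) -
        ((aeval x (psiPoly f i) * aeval x (truncT g a i) -
            aeval x (phiPoly f i) * aeval x (truncR g a i)) * (x - algebraMap k K a) -
          2 * (i : K) * aeval x f * (-1 : K) ^ (g - i) * (g.choose i : K) *
            algebraMap k K a ^ (g - i + 1) * x ^ i) /
        (2 * x ^ (i + 1) * (x - algebraMap k K a) ^ (g + 1) * y) :=
  statement6_general hk2 f hf0 K x y hx hy g a i hi1 D hD
end

section
/- If z ∈ K satisfies z² = f(x + a) (the image in K of the polynomial f(X + a) ∈ k[X]), then f(X + a) = f(X) in k[X], and z = y or z = −y. (This expresses that any automorphism τ of the hyperelliptic curve inducing x ↦ x + a on P¹ satisfies τ*(y) = ±y.) -/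
open Polynomial

theorem Squarefree.map_mulEquiv {M N F : Type*} [Monoid M] [Monoid N] [EquivLike F M N]
    [MulEquivClass F M N] (e : F) {x : M} (hx : Squarefree x) : Squarefree (e x) := by
  let e' : M ≃* N := e
  intro u hu
  have h := hx (e'.symm u) (by simpa [e'] using map_dvd e'.symm hu)
  simpa [e'] using h.map e'

theorem Squarefree.not_isSquare {M : Type*} [Monoid M] {x : M} (hx : Squarefree x)
    (hu : ¬IsUnit x) : ¬IsSquare x := by
  rintro ⟨s, rfl⟩
  exact hu ((hx s dvd_rfl).mul (hx s dvd_rfl))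

section IntegrallyClosed

variable {R : Type*} [CommRing R] [IsDomain R] [IsIntegrallyClosed R]

theorem eq_zero_of_sq_eq_mul_sq {f r t : R} (hf : ¬IsSquare f) (h : r ^ 2 = f * t ^ 2) :
    t = 0 := by
  by_contra ht
  obtain ⟨s, rfl⟩ := (IsIntegrallyClosed.pow_dvd_pow_iff two_ne_zero).1
    (⟨f, by rw [h, mul_comm]⟩ : t ^ 2 ∣ r ^ 2)
  refine hf ⟨s, mul_left_cancel₀ (pow_ne_zero 2 ht) ?_⟩
  linear_combination -h

theorem associated_of_mul_sq_eq_mul_sq [DecompositionMonoid R] {f g α β : R}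
    (hf : Squarefree f) (hg : Squarefree g) (hβ : β ≠ 0) (h : f * α ^ 2 = g * β ^ 2) :
    Associated f g := by
  obtain ⟨e, he⟩ := (IsIntegrallyClosed.pow_dvd_pow_iff two_ne_zero).1
    (⟨f * g, by linear_combination f * h⟩ : β ^ 2 ∣ (f * α) ^ 2)
  have he2 : e ^ 2 = f * g := mul_left_cancel₀ (pow_ne_zero 2 hβ) (by
    linear_combination f * h - (f * α + β * e) * he)
  obtain ⟨u, rfl⟩ := (hf.dvd_pow_iff_dvd two_ne_zero).1 ⟨g, he2⟩
  have hgu : g = f * u ^ 2 := mul_left_cancel₀ hf.ne_zero (by linear_combination -he2)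
  subst hgu
  exact associated_mul_unit_right f _ ((hg u ⟨f, by ring⟩).pow 2)

end IntegrallyClosed

theorem Polynomial.eq_of_associated_of_leadingCoeff_eq {R : Type*} [CommRing R] [IsDomain R]
    {p q : R[X]} (h : Associated p q) (hlc : p.leadingCoeff = q.leadingCoeff) : p = q := by
  obtain ⟨u, rfl⟩ := h
  obtain ⟨c, -, hc⟩ := Polynomial.isUnit_iff.1 u.isUnit
  rcases eq_or_ne p 0 with rfl | hp
  · simp
  rw [← hc, leadingCoeff_mul, leadingCoeff_C] at hlc
  have : c = 1 := mul_left_cancel₀ (leadingCoeff_ne_zero.2 hp) (by rw [← hlc, mul_one])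
  rw [← hc, this, map_one, mul_one]

namespace AdjoinRoot

theorem aeval_algebraMap_of_X {k : Type*} [CommRing k] {P : k[X][X]} {K : Type*} [CommRing K]
    [Algebra k K] [Algebra (AdjoinRoot P) K] [IsScalarTower k (AdjoinRoot P) K] (g : k[X]) :
    aeval (algebraMap _ K (of P X)) g = algebraMap _ K (of P g) := by
  rw [aeval_algebraMap_apply, ← algebraMap_eq, aeval_algebraMap_apply, aeval_X_left_apply]

variable {R : Type*} [CommRing R] {f : R}

theorem root_X_sq_sub_C_sq : root (X ^ 2 - C f) ^ 2 = of _ f := by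
  rw [← mk_X, ← map_pow, ← sub_eq_zero, ← mk_C, ← map_sub, mk_self]

theorem mk_C_mul_X_add_C (p q : R) :
    mk (X ^ 2 - C f) (C q * X + C p) = of _ p + of _ q * root _ := by
  rw [map_add, map_mul, mk_C, mk_C, mk_X, add_comm]

variable [Nontrivial R]

theorem exists_of_add_of_mul_root_eq (u : AdjoinRoot (X ^ 2 - C f)) :
    ∃ p q : R, of _ p + of _ q * root _ = u := by
  have hmonic : (X ^ 2 - C f).Monic := monic_X_pow_sub_C f two_ne_zero
  obtain ⟨P, rfl⟩ := mk_surjective u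
  have hr : (P %ₘ (X ^ 2 - C f)).natDegree ≤ 1 := by
    have := natDegree_modByMonic_lt P hmonic
      (ne_of_apply_ne natDegree (by rw [natDegree_X_pow_sub_C, natDegree_one]; norm_num))
    rw [natDegree_X_pow_sub_C] at this
    omega
  refine ⟨(P %ₘ (X ^ 2 - C f)).coeff 0, (P %ₘ (X ^ 2 - C f)).coeff 1, ?_⟩
  rw [← mk_C_mul_X_add_C, ← eq_X_add_C_of_natDegree_le_one hr, ← modByMonicHom_mk hmonic,
    mk_leftInverse hmonic]

theorem of_add_of_mul_root_inj {p q p' q' : R} :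
    of (X ^ 2 - C f) p + of _ q * root _ = of _ p' + of _ q' * root _ ↔ p = p' ∧ q = q' := by
  refine ⟨fun h ↦ ?_, by rintro ⟨rfl, rfl⟩; rfl⟩
  have hmonic : (X ^ 2 - C f).Monic := monic_X_pow_sub_C f two_ne_zero
  have hmod : ∀ p q : R, modByMonicHom hmonic (of _ p + of _ q * root _) = C q * X + C p := by
    intro p q
    rw [← mk_C_mul_X_add_C, modByMonicHom_mk, modByMonic_eq_self_iff hmonic,
      degree_X_pow_sub_C two_pos]
    exact degree_linear_lt
  have h' := congrArg (modByMonicHom hmonic) h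
  rw [hmod, hmod] at h'
  exact ⟨by simpa using congrArg (coeff · 0) h', by simpa using congrArg (coeff · 1) h'⟩

theorem sq_of_add_of_mul_root_eq_of_iff {p q c : R} :
    (of (X ^ 2 - C f) p + of _ q * root _) ^ 2 = of _ c ↔
      2 * p * q = 0 ∧ p ^ 2 + q ^ 2 * f = c := by
  have hsq : (of (X ^ 2 - C f) p + of _ q * root _) ^ 2
      = of _ (p ^ 2 + q ^ 2 * f) + of _ (2 * p * q) * root _ := by
    simp only [map_add, map_mul, map_pow, map_ofNat]
    linear_combination (of _ q) ^ 2 * root_X_sq_sub_C_sq (f := f)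
  have hc : of (X ^ 2 - C f) c = of _ c + of _ 0 * root _ := by simp
  rw [hsq, hc, of_add_of_mul_root_inj, and_comm]

end AdjoinRoot

namespace AdjoinRoot

variable {R : Type*} [CommRing R] [IsDomain R] {f : R}
  {K : Type*} [Field K] [Algebra (AdjoinRoot (X ^ 2 - C f)) K]
  [IsFractionRing (AdjoinRoot (X ^ 2 - C f)) K]

theorem algebraMap_of_ne_zero {M : R} (hM : M ≠ 0) :
    algebraMap _ K (of (X ^ 2 - C f) M) ≠ 0 := by
  rw [map_ne_zero_iff _ (IsFractionRing.injective _ K),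
    map_ne_zero_iff _ (of.injective_of_degree_ne_zero (by rw [degree_X_pow_sub_C two_pos]; simp))]
  exact hM

variable [IsIntegrallyClosed R]

theorem exists_mul_algebraMap_of_eq (hf : ¬IsSquare f) (z : K) :
    ∃ M : R, M ≠ 0 ∧ ∃ p q : R,
      z * algebraMap _ K (of (X ^ 2 - C f) M) =
        algebraMap _ K (of (X ^ 2 - C f) p + of _ q * root _) := by
  have : Nontrivial (AdjoinRoot (X ^ 2 - C f)) := (algebraMap _ K).domain_nontrivial
  obtain ⟨A, B, hB, rfl⟩ := IsFractionRing.div_surjective (A := AdjoinRoot (X ^ 2 - C f)) z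
  obtain ⟨p, q, rfl⟩ := exists_of_add_of_mul_root_eq A
  obtain ⟨r, s, rfl⟩ := exists_of_add_of_mul_root_eq B
  refine ⟨r ^ 2 - s ^ 2 * f, fun hM ↦ ?_, p * r - q * s * f, q * r - p * s, ?_⟩
  · have hs : s = 0 := eq_zero_of_sq_eq_mul_sq (r := r) hf (by linear_combination hM)
    have hr : r = 0 := by simpa [hs] using hM
    exact nonZeroDivisors.ne_zero hB (by simp [hr, hs])
  · rw [div_mul_eq_mul_div, div_eq_iff (IsFractionRing.to_map_ne_zero_of_mem_nonZeroDivisors hB),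
      ← map_mul, ← map_mul]
    congr 1
    simp only [map_sub, map_mul, map_pow]
    linear_combination
      (-((of _ q * of _ r - of _ p * of _ s) * of _ s)) * root_X_sq_sub_C_sq (f := f)

theorem exists_mul_algebraMap_of_eq_of_sq_eq (hf : ¬IsSquare f) (h2 : (2 : R) ≠ 0) {z : K}
    {c : R} (hz : z ^ 2 = algebraMap _ K (of (X ^ 2 - C f) c)) :
    ∃ M : R, M ≠ 0 ∧ ∃ d : R,
      (d ^ 2 = c * M ^ 2 ∧
        z * algebraMap _ K (of (X ^ 2 - C f) M) = algebraMap _ K (of (X ^ 2 - C f) d)) ∨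
      (d ^ 2 * f = c * M ^ 2 ∧
        z * algebraMap _ K (of (X ^ 2 - C f) M) =
          algebraMap _ K (of (X ^ 2 - C f) d * root _)) := by
  obtain ⟨M, hM, p, q, hzM⟩ := exists_mul_algebraMap_of_eq hf z
  have hsq : (of (X ^ 2 - C f) p + of _ q * root _) ^ 2 = of _ (c * M ^ 2) := by
    apply IsFractionRing.injective _ K
    rw [map_pow, ← hzM, mul_pow, hz, map_mul, map_mul, map_pow, map_pow]
  obtain ⟨hpq, hnorm⟩ := sq_of_add_of_mul_root_eq_of_iff.1 hsq
  rcases mul_eq_zero.1 hpq with hp | rfl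
  · obtain rfl : p = 0 := by simpa [h2] using hp
    exact ⟨M, hM, q, .inr ⟨by simpa using hnorm, by simpa using hzM⟩⟩
  · exact ⟨M, hM, p, .inl ⟨by simpa using hnorm, by simpa using hzM⟩⟩

end AdjoinRoot

theorem statement7_general {k : Type} [Field k] (p : ℕ) [CharP k p] (hp : 3 ≤ p)
    (f : k[X]) (hsqf : Squarefree f) (hdeg : 3 ≤ f.natDegree)
    (K : Type) [Field K] [Algebra k K] [Algebra (OddRing f) K]
    [IsScalarTower k (OddRing f) K] [IsFractionRing (OddRing f) K]
    (x y : K)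
    (hx : x = algebraMap (OddRing f) K (AdjoinRoot.of (oddPoly f) X))
    (hy : y = algebraMap (OddRing f) K (AdjoinRoot.root (oddPoly f)))
    (a : k)
    (z : K) (hz : z ^ 2 = aeval x (f.comp (X + C a))) :
    f.comp (X + C a) = f ∧ (z = y ∨ z = -y) := by
  -- make `oddPoly f` syntactically `X ^ 2 - C f`, so the instances on `OddRing f` fit the lemmas
  unfold OddRing at *
  generalize hP : oddPoly f = P at *
  rw [oddPoly] at hP
  subst hP hx hy
  rw [← taylor_apply, AdjoinRoot.aeval_algebraMap_of_X] at hz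
  rw [← taylor_apply]
  have hg : Squarefree (taylor a f) := hsqf.map_mulEquiv (taylorEquiv a)
  have h2 : (2 : k[X]) ≠ 0 := by
    exact_mod_cast C_ne_zero.2 (Ring.two_ne_zero (by rw [ringChar.eq k p]; omega) : (2 : k) ≠ 0)
  obtain ⟨M, hM, d, ⟨hnorm, -⟩ | ⟨hnorm, hzM⟩⟩ :=
    AdjoinRoot.exists_mul_algebraMap_of_eq_of_sq_eq
      (hsqf.not_isSquare (not_isUnit_of_natDegree_pos f (by omega))) h2 hz
  · refine absurd (eq_zero_of_sq_eq_mul_sq (hg.not_isSquare ?_) hnorm) hM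
    exact not_isUnit_of_natDegree_pos _ (by rw [natDegree_taylor]; omega)
  have hgf : taylor a f = f := (eq_of_associated_of_leadingCoeff_eq
    (associated_of_mul_sq_eq_mul_sq hsqf hg hM ((mul_comm _ _).trans hnorm))
    (leadingCoeff_taylor ..).symm).symm
  refine ⟨hgf, ?_⟩
  rw [hgf] at hnorm
  have hM' := AdjoinRoot.algebraMap_of_ne_zero (K := K) (f := f) hM
  rcases sq_eq_sq_iff_eq_or_eq_neg.1 (mul_right_cancel₀ hsqf.ne_zero
    (show d ^ 2 * f = M ^ 2 * f by linear_combination hnorm)) with rfl | rfl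
  · exact .inl (mul_right_cancel₀ hM' (by rw [hzM, map_mul, mul_comm]))
  · exact .inr (mul_right_cancel₀ hM' (by rw [hzM, map_mul, map_neg, map_neg]; ring))

/-- Let `k` be algebraically closed of characteristic `p ≥ 3`, `f` monic
squarefree of degree `≥ 3`, `K` the fraction field of `k[X][Y]/(Y² − f(X))`, and `a ≠ 0`.
If `z ∈ K` satisfies `z² = f(x + a)`, then `f(X + a) = f(X)` in `k[X]` and `z = y` or
`z = −y`. -/
theorem statement7 {k : Type} [Field k] [IsAlgClosed k] (p : ℕ) [CharP k p] (hp : 3 ≤ p)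
    (f : k[X]) (hmonic : f.Monic) (hsqf : Squarefree f) (hdeg : 3 ≤ f.natDegree)
    (K : Type) [Field K] [Algebra k K] [Algebra (OddRing f) K]
    [IsScalarTower k (OddRing f) K] [IsFractionRing (OddRing f) K]
    (x y : K)
    (hx : x = algebraMap (OddRing f) K (AdjoinRoot.of (oddPoly f) X))
    (hy : y = algebraMap (OddRing f) K (AdjoinRoot.root (oddPoly f)))
    (a : k) (ha : a ≠ 0)
    (z : K) (hz : z ^ 2 = aeval x (f.comp (X + C a))) :
    f.comp (X + C a) = f ∧ (z = y ∨ z = -y) :=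
  statement7_general p hp f hsqf hdeg K x y hx hy a z hz
end

section
/- If f(X) ∈ k[X] satisfies f(X + a) = f(X), then there exists a polynomial q(Z) ∈ k[Z] such that f(X) = q(X^p − a^{p−1}·X), i.e. f is the composite of q with X^p − a^{p−1}·X. -/
/-!
The polynomial `π = X ^ p - a ^ (p - 1) * X` is monic of degree `p` and, since
`(X + a) ^ p = X ^ p + a ^ p` in characteristic `p`, invariant under the shift `X ↦ X + a`.
Dividing a shift-invariant `f` by `π`, uniqueness of division makes quotient and remainder
shift-invariant as well. The remainder has degree `< p` and takes the same value at the `p`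
distinct points `0, a, …, (p - 1) a`, so it is a constant `c`; the quotient is of the form
`q ∘ π` by induction on the degree, whence `f = (c + X q) ∘ π`.
-/

open Polynomial

namespace Polynomial

variable {R : Type*} [CommRing R] {p : ℕ} {a : R}

noncomputable def artinSchreier (p : ℕ) (a : R) : R[X] := X ^ p - C (a ^ (p - 1)) * X

theorem natDegree_artinSchreier [Nontrivial R] (a : R) (hp : 2 ≤ p) :
    (artinSchreier p a).natDegree = p := by
  have : (C (a ^ (p - 1)) * X).natDegree < p :=
    (natDegree_C_mul_le _ _).trans_lt (by rw [natDegree_X]; omega)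
  rw [artinSchreier, natDegree_sub_eq_left_of_natDegree_lt (by rwa [natDegree_X_pow]),
    natDegree_X_pow]

theorem monic_artinSchreier (a : R) (hp : 2 ≤ p) : (artinSchreier p a).Monic :=
  monic_X_pow_sub ((degree_C_mul_X_le _).trans_lt (by exact_mod_cast hp))

theorem taylor_artinSchreier [CharP R p] [Fact p.Prime] (a : R) :
    taylor a (artinSchreier p a) = artinSchreier p a := by
  have hpow : a ^ (p - 1) * a = a ^ p := by
    rw [← pow_succ, Nat.sub_add_cancel (Fact.out : p.Prime).one_le]
  rw [artinSchreier, map_sub, taylor_X_pow, taylor_mul, taylor_C, taylor_X, add_pow_char,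
    mul_add, ← C_mul, hpow, ← C_pow]
  ring

theorem taylor_div_modByMonic_of_taylor_eq_self [Nontrivial R] {g : R[X]} (hg : g.Monic)
    (hga : taylor a g = g) (f : R[X]) :
    taylor a f /ₘ g = taylor a (f /ₘ g) ∧ taylor a f %ₘ g = taylor a (f %ₘ g) := by
  refine div_modByMonic_unique _ _ hg ⟨?_, ?_⟩
  · rw [← hga, ← taylor_mul, ← map_add, hga, modByMonic_add_div f g]
  · rw [degree_taylor]
    exact degree_modByMonic_lt f hg

theorem eval_natCast_mul_of_taylor_eq_self {r : R[X]} (hr : taylor a r = r) (n : ℕ) :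
    r.eval (n * a) = r.eval 0 := by
  induction n with
  | zero => simp
  | succ n ih => rw [Nat.cast_succ, add_one_mul, ← taylor_eval, hr, ih]

theorem eq_C_of_taylor_eq_self [IsDomain R] [CharP R p] (ha : a ≠ 0) {r : R[X]}
    (hdeg : r.natDegree < p) (hr : taylor a r = r) : r = C (r.eval 0) := by
  have hinj : Function.Injective fun i : Fin p => (i : R) * a := fun i j hij =>
    Fin.ext (CharP.natCast_injOn_Iio R p i.isLt j.isLt (mul_right_cancel₀ ha hij))
  refine sub_eq_zero.mp (eq_zero_of_natDegree_lt_card_of_eval_eq_zero _ hinj (fun i => ?_) ?_)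
  · rw [eval_sub, eval_C, eval_natCast_mul_of_taylor_eq_self hr, sub_self]
  · rwa [natDegree_sub_C, Fintype.card_fin]

theorem exists_eq_comp_artinSchreier_of_taylor_eq_self [IsDomain R] [CharP R p] [Fact p.Prime]
    (ha : a ≠ 0) (f : R[X]) (hf : taylor a f = f) :
    ∃ q : R[X], f = q.comp (artinSchreier p a) := by
  have hp : 2 ≤ p := (Fact.out : p.Prime).two_le
  set π := artinSchreier p a
  have hπ : π.Monic := monic_artinSchreier a hp
  obtain ⟨hdiv, hmod⟩ := taylor_div_modByMonic_of_taylor_eq_self hπ (taylor_artinSchreier a) f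
  rw [hf] at hdiv hmod
  have hdeg : π.natDegree = p := natDegree_artinSchreier a hp
  have hr : f %ₘ π = C ((f %ₘ π).eval 0) := by
    refine eq_C_of_taylor_eq_self ha (hdeg ▸ natDegree_modByMonic_lt f hπ ?_) hmod.symm
    intro hπ1
    rw [hπ1, natDegree_one] at hdeg
    omega
  by_cases hq : f /ₘ π = 0
  · refine ⟨C ((f %ₘ π).eval 0), ?_⟩
    rw [C_comp, ← hr]
    simpa [hq] using (modByMonic_add_div f π).symm
  · have hdeg_lt : (f /ₘ π).natDegree < f.natDegree :=
      natDegree_lt_natDegree hq <| degree_divByMonic_lt f π (by rintro rfl; simp at hq) <|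
        natDegree_pos_iff_degree_pos.mp (by omega)
    obtain ⟨q, hq⟩ := exists_eq_comp_artinSchreier_of_taylor_eq_self ha (f /ₘ π) hdiv.symm
    exact ⟨C ((f %ₘ π).eval 0) + X * q, by
      rw [add_comp, mul_comp, X_comp, C_comp, ← hq, ← hr, modByMonic_add_div f π]⟩
termination_by f.natDegree

end Polynomial

theorem statement8_general {k : Type} [Field k] (p : ℕ) [CharP k p] (hp : 3 ≤ p)
    (a : k) (ha : a ≠ 0) (f : k[X]) (hfa : f.comp (X + C a) = f) :
    ∃ q : k[X], f = q.comp (X ^ p - C (a ^ (p - 1)) * X) := by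
  have hprime : p.Prime := (CharP.char_is_prime_or_zero k p).resolve_right (by omega)
  have := Fact.mk hprime
  exact exists_eq_comp_artinSchreier_of_taylor_eq_self ha f hfa

/-- Let `k` be algebraically closed of characteristic `p ≥ 3` and `a ≠ 0`.
If `f(X + a) = f(X)`, then `f(X) = q(X^p − a^{p−1}·X)` for some `q ∈ k[X]`. -/
theorem statement8 {k : Type} [Field k] [IsAlgClosed k] (p : ℕ) [CharP k p] (hp : 3 ≤ p)
    (a : k) (ha : a ≠ 0) (f : k[X]) (hfa : f.comp (X + C a) = f) :
    ∃ q : k[X], f = q.comp (X ^ p - C (a ^ (p - 1)) * X) :=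
  statement8_general p hp a ha f hfa
end

section
/- If q(Z) ∈ k[Z] is a monic polynomial with no repeated roots (i.e. q is squarefree), then the polynomial f(X) := q(X^p − a^{p−1}·X) ∈ k[X] is monic and has no repeated roots (is squarefree). Consequently y² = q(x^p − a^{p−1}x) defines a hyperelliptic curve admitting the automorphism (x, y) ↦ (x + a, y). -/
open Polynomial

/-- Let `k` be algebraically closed of characteristic `p ≥ 3` and `a ≠ 0`.
If `q ∈ k[X]` is monic and squarefree, then `f(X) := q(X^p − a^{p−1}·X)` is monic and
squarefree; moreover `f(X + a) = f(X)`, so that the hyperelliptic curve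
`y² = q(x^p − a^{p−1}x)` admits the automorphism `(x, y) ↦ (x + a, y)`. -/
theorem statement9 {k : Type} [Field k] [IsAlgClosed k] (p : ℕ) [CharP k p] (hp : 3 ≤ p)
    (a : k) (ha : a ≠ 0) (q : k[X]) (hq : q.Monic) (hsq : Squarefree q) :
    (q.comp (X ^ p - C (a ^ (p - 1)) * X)).Monic ∧
      Squarefree (q.comp (X ^ p - C (a ^ (p - 1)) * X)) ∧
      (q.comp (X ^ p - C (a ^ (p - 1)) * X)).comp (X + C a) =
        q.comp (X ^ p - C (a ^ (p - 1)) * X) := by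
  have hprime : p.Prime := CharP.char_is_prime_of_two_le (R := k) p (by omega)
  haveI : Fact p.Prime := ⟨hprime⟩
  have ha' : a ^ (p - 1) ≠ 0 := pow_ne_zero _ ha
  set g : k[X] := X ^ p - C (a ^ (p - 1)) * X with hg
  have hdeg : ((C (a ^ (p - 1)) : k[X]) * X).degree < (X ^ p : k[X]).degree := by
    rw [degree_C_mul_X ha', degree_X_pow]
    exact_mod_cast (by omega : (1:ℕ) < p)
  have hgm : g.Monic := (monic_X_pow p).sub_of_left hdeg
  have hgd : g.natDegree ≠ 0 := by
    have : g.degree = p := by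
      rw [hg, sub_eq_add_neg]
      rw [degree_add_eq_left_of_degree_lt (by simpa using hdeg), degree_X_pow]
    have := natDegree_eq_of_degree_eq_some this
    omega
  have hmonic : (q.comp g).Monic := hq.comp hgm hgd
  -- derivative of g is -C(a^(p-1))
  have hdg : g.derivative = -C (a ^ (p - 1)) := by
    rw [hg]
    simp [derivative_X_pow, derivative_pow, CharP.cast_eq_zero k p]
  -- q is separable
  have hqsep : q.Separable := (PerfectField.separable_iff_squarefree).2 hsq
  -- coprimality of q.comp g and q.derivative.comp g
  obtain ⟨u, v, huv⟩ := hqsep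
  have hcop : IsCoprime (q.comp g) (q.derivative.comp g) :=
    ⟨u.comp g, v.comp g, by
      rw [← mul_comp, ← mul_comp, ← add_comp, huv, one_comp]⟩
  have hsep : (q.comp g).Separable := by
    rw [Polynomial.Separable, derivative_comp, hdg]
    have hu : IsUnit (-C (a ^ (p - 1)) : k[X]) :=
      (isUnit_C.2 (ha'.isUnit)).neg
    exact (isCoprime_mul_unit_left_right hu _ _).2 hcop
  have hsqf : Squarefree (q.comp g) := (PerfectField.separable_iff_squarefree).1 hsep
  refine ⟨hmonic, hsqf, ?_⟩
  rw [comp_assoc]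
  congr 1
  have hC : ((C a : k[X])) ^ p = C (a ^ p) := by rw [← map_pow]
  have hpow : (X + C a : k[X]) ^ p = X ^ p + C (a ^ p) := by
    rw [add_pow_char, hC]
  have hap : a ^ (p - 1) * a = a ^ p := by
    rw [← pow_succ]
    congr 1
    omega
  rw [hg]
  simp only [sub_comp, pow_comp, mul_comp, X_comp, C_comp, hpow]
  rw [mul_add, ← C_mul, hap]
  ring
end

section
/- For every integer i ≥ 1: (a) σ(ψ_i(x,y)) + ψ_i(x,y) = ((X·h′(X) + i·h(X))^{≤i})(x) · h(x) in K, where ψ_i(x,y) := ((X·f′(X))^{≤i})(x) + ((X·h′(X) + i·h(X))^{≤i})(x)·y; and (b) for every k-linear derivation D : K → K with D(x) = 1, x^{i+1}·D( (h^{≤i})(x)/xⁱ ) = ((X·h′(X) + i·h(X))^{≤i})(x). Consequently σ(ψ_i(x,y)/(x^{i+1}·h(x))) + ψ_i(x,y)/(x^{i+1}·h(x)) = D( (h^{≤i})(x)/xⁱ ). (This is the key computation showing the hyperelliptic involution acts trivially on H¹_dR in characteristic 2.) -/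
open Polynomial

/-!
Since `σ` fixes `k(x)` and moves `y` by `h(x)`, in characteristic 2 it changes `a + b·y` by
exactly `b·h(x)`; this is (a). For (b), `D(p(x)/xⁱ) = (x·p′(x) − i·p(x))/x^{i+1}`, and the Euler
operator `X·d/dX + i` (equal to `X·d/dX − i` in characteristic 2) acts diagonally on monomials,
so it commutes with truncation. The last identity is (a) divided by `x^{i+1}·h(x)`, which is
nonzero because `x` is transcendental over `k`.
-/

section Truncation

variable {k : Type} [Field k] (m : ℕ)

lemma coeff_truncLE (u : k[X]) (n : ℕ) :
    (truncLE m u).coeff n = if n ≤ m then u.coeff n else 0 := by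
  simp only [truncLE, finsetSum_coeff, coeff_C_mul_X_pow, Finset.sum_ite_eq,
    Finset.mem_range, Nat.lt_succ_iff]

lemma truncLE_add (u v : k[X]) : truncLE m (u + v) = truncLE m u + truncLE m v := by
  ext n
  simp only [coeff_truncLE, coeff_add]
  split_ifs <;> simp

lemma truncLE_C_mul (c : k) (u : k[X]) : truncLE m (C c * u) = C c * truncLE m u := by
  ext n
  simp only [coeff_truncLE, coeff_C_mul]
  split_ifs <;> simp

lemma truncLE_X_mul_derivative (u : k[X]) :
    truncLE m (X * derivative u) = X * derivative (truncLE m u) := by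
  ext n
  rcases n with _ | n
  · simp [coeff_truncLE]
  · simp only [coeff_truncLE, coeff_X_mul, coeff_derivative]
    split_ifs <;> simp

end Truncation

lemma Derivation.pow_succ_mul_apply_aeval_div_pow {k K : Type} [Field k] [Field K] [Algebra k K]
    (D : Derivation k K K) {x : K} (hD : D x = 1) (p : k[X]) (i : ℕ) :
    x ^ (i + 1) * D (aeval x p / x ^ i) = aeval x (X * derivative p - C (i : k) * p) := by
  have hx : x ≠ 0 := by rintro rfl; simp at hD
  rw [D.leibniz_div, D.map_aeval, D.leibniz_pow, hD]
  simp only [smul_eq_mul, nsmul_eq_mul, mul_one, map_sub, map_mul, aeval_X, aeval_C]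
  rcases i with _ | i
  · simp
  · field_simp
    push_cast
    ring

lemma add_map_add_mul_eq_mul {R F : Type*} [CommRing R] [CharP R 2] [FunLike F R R]
    [RingHomClass F R R] (σ : F) {a b y c : R} (ha : σ a = a) (hb : σ b = b)
    (hy : σ y = y + c) : σ (a + b * y) + (a + b * y) = b * c := by
  rw [map_add, map_mul, ha, hb, hy]
  linear_combination (a + b * y) * CharTwo.two_eq_zero (R := R)

lemma degree_hypPoly {k : Type} [Field k] (h f : k[X]) : (hypPoly h f).degree = 2 := by
  unfold hypPoly
  compute_degree!

lemma aeval_injective_of_isFractionRing {k : Type} [Field k] (h f : k[X])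
    (K : Type) [CommRing K] [Algebra k K] [Algebra (HypRing h f) K]
    [IsScalarTower k (HypRing h f) K] [IsFractionRing (HypRing h f) K] :
    Function.Injective (aeval (algebraMap (HypRing h f) K (AdjoinRoot.of (hypPoly h f) X)) :
      k[X] → K) := by
  have hcomp : ∀ u : k[X], aeval (algebraMap (HypRing h f) K (AdjoinRoot.of (hypPoly h f) X)) u
      = algebraMap (HypRing h f) K (AdjoinRoot.of (hypPoly h f) u) := by
    intro u
    rw [aeval_algebraMap_apply, ← AdjoinRoot.algebraMap_eq, aeval_algebraMap_apply,
      aeval_X_left_apply]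
  intro u v huv
  simp only [hcomp] at huv
  exact AdjoinRoot.of.injective_of_degree_ne_zero (by simp [degree_hypPoly])
    (IsFractionRing.injective (HypRing h f) K huv)

theorem statement12_general {k : Type} [Field k] [CharP k 2]
    (h f : k[X]) (hh : h ≠ 0)
    (K : Type) [Field K] [Algebra k K] [Algebra (HypRing h f) K]
    [IsScalarTower k (HypRing h f) K] [IsFractionRing (HypRing h f) K]
    (x y : K)
    (hx : x = algebraMap (HypRing h f) K (AdjoinRoot.of (hypPoly h f) X))
    (σ : K ≃ₐ[k] K) (hσx : σ x = x) (hσy : σ y = y + aeval x h)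
    (i : ℕ) :
    σ (aeval x (truncLE i (X * derivative f)) +
          aeval x (truncLE i (X * derivative h + C (i : k) * h)) * y) +
        (aeval x (truncLE i (X * derivative f)) +
          aeval x (truncLE i (X * derivative h + C (i : k) * h)) * y) =
      aeval x (truncLE i (X * derivative h + C (i : k) * h)) * aeval x h ∧
    ∀ D : Derivation k K K, D x = 1 →
      x ^ (i + 1) * D (aeval x (truncLE i h) / x ^ i) =
          aeval x (truncLE i (X * derivative h + C (i : k) * h)) ∧
        σ ((aeval x (truncLE i (X * derivative f)) +
              aeval x (truncLE i (X * derivative h + C (i : k) * h)) * y) /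
            (x ^ (i + 1) * aeval x h)) +
          (aeval x (truncLE i (X * derivative f)) +
              aeval x (truncLE i (X * derivative h + C (i : k) * h)) * y) /
            (x ^ (i + 1) * aeval x h) =
        D (aeval x (truncLE i h) / x ^ i) := by
  have : CharP K 2 := charP_of_injective_algebraMap (algebraMap k K).injective 2
  have hσ : ∀ u : k[X], σ (aeval x u) = aeval x u := fun u => by
    rw [← aeval_algHom_apply, hσx]
  have partA := add_map_add_mul_eq_mul σ (hσ (truncLE i (X * derivative f)))
    (hσ (truncLE i (X * derivative h + C (i : k) * h))) hσy
  refine ⟨partA, fun D hD => ?_⟩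
  have partB : x ^ (i + 1) * D (aeval x (truncLE i h) / x ^ i) =
      aeval x (truncLE i (X * derivative h + C (i : k) * h)) := by
    rw [D.pow_succ_mul_apply_aeval_div_pow hD, CharTwo.sub_eq_add, truncLE_add, truncLE_C_mul,
      truncLE_X_mul_derivative]
  refine ⟨partB, ?_⟩
  have hx0 : x ≠ 0 := by rintro rfl; simp at hD
  have hh0 : aeval x h ≠ 0 := by
    rw [hx]
    exact (map_ne_zero_iff _ (aeval_injective_of_isFractionRing h f K)).mpr hh
  rw [map_div₀, map_mul, map_pow, hσx, hσ, ← add_div, partA, mul_div_mul_right _ _ hh0,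
    ← partB, mul_div_cancel_left₀ _ (pow_ne_zero _ hx0)]

/-- Let `char k = 2`, `h ≠ 0`, `Y² − hY − f` irreducible over `k(X)`, `K`
the fraction field of `k[X][Y]/(Y² − hY − f)`, and `σ` the hyperelliptic involution, i.e.
the `k(x)`-algebra automorphism of `K` with `σ(y) = y + h(x)`.  For every `i ≥ 1`, setting
`ψ_i(x,y) := ((X·f′)^{≤i})(x) + ((X·h′ + i·h)^{≤i})(x)·y`:
(a) `σ(ψ_i(x,y)) + ψ_i(x,y) = ((X·h′ + i·h)^{≤i})(x)·h(x)`;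
(b) for every `k`-linear derivation `D : K → K` with `D x = 1`,
`x^{i+1}·D(h^{≤i}(x)/xⁱ) = ((X·h′ + i·h)^{≤i})(x)`, and consequently
`σ(ψ_i(x,y)/(x^{i+1}h(x))) + ψ_i(x,y)/(x^{i+1}h(x)) = D(h^{≤i}(x)/xⁱ)`. -/
theorem statement12 {k : Type} [Field k] [CharP k 2]
    (h f : k[X]) (hh : h ≠ 0)
    (hirr : Irreducible ((hypPoly h f).map (algebraMap (Polynomial k) (RatFunc k))))
    (K : Type) [Field K] [Algebra k K] [Algebra (HypRing h f) K]
    [IsScalarTower k (HypRing h f) K] [IsFractionRing (HypRing h f) K]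
    (x y : K)
    (hx : x = algebraMap (HypRing h f) K (AdjoinRoot.of (hypPoly h f) X))
    (hy : y = algebraMap (HypRing h f) K (AdjoinRoot.root (hypPoly h f)))
    (σ : K ≃ₐ[k] K) (hσx : σ x = x) (hσy : σ y = y + aeval x h)
    (i : ℕ) (hi : 1 ≤ i) :
    σ (aeval x (truncLE i (X * derivative f)) +
          aeval x (truncLE i (X * derivative h + C (i : k) * h)) * y) +
        (aeval x (truncLE i (X * derivative f)) +
          aeval x (truncLE i (X * derivative h + C (i : k) * h)) * y) =
      aeval x (truncLE i (X * derivative h + C (i : k) * h)) * aeval x h ∧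
    ∀ D : Derivation k K K, D x = 1 →
      x ^ (i + 1) * D (aeval x (truncLE i h) / x ^ i) =
          aeval x (truncLE i (X * derivative h + C (i : k) * h)) ∧
        σ ((aeval x (truncLE i (X * derivative f)) +
              aeval x (truncLE i (X * derivative h + C (i : k) * h)) * y) /
            (x ^ (i + 1) * aeval x h)) +
          (aeval x (truncLE i (X * derivative f)) +
              aeval x (truncLE i (X * derivative h + C (i : k) * h)) * y) /
            (x ^ (i + 1) * aeval x h) =
        D (aeval x (truncLE i h) / x ^ i) :=
  statement12_general h f hh K x y hx σ hσx hσy i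
end
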